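/- Let m, n ≥ 1 and let B = {φ_x ⊗ χ_x}_{x∈X} be a finite family of product vectors in ℂ^m ⊗ ℂ^n with |X| ≥ m + n − 1. Assume that for every subset T ⊆ X with |T| = m the vectors {φ_x : x ∈ T} span ℂ^m, and for every subset T ⊆ X with |T| = n the vectors {χ_x : x ∈ T} span ℂ^n. Then no nonzero product vector lies in the orthogonal complement of span B; that is, if f ∈ ℂ^m and g ∈ ℂ^n satisfy ⟨φ_x ⊗ χ_x, f ⊗ g⟩ = 0 for all x ∈ X, then f ⊗ g = 0. -/

import Mathlib

/-!
A product vector `f ⊗ g` is orthogonal to `φ x ⊗ χ x` exactly when `φ x ⊥ f` or `χ x ⊥ g`.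
If `f ≠ 0`, fewer than `m` of the `φ x` can be orthogonal to it, since any `m` of them span;
likewise fewer than `n` of the `χ x` are orthogonal to `g ≠ 0`. So at most `m + n - 2` members of
the family are orthogonal to `f ⊗ g`, fewer than the `m + n - 1` available.
-/

open scoped InnerProductSpace

noncomputable section

/-- The tensor product of `a ∈ ℂ^m` and `b ∈ ℂ^n`, realized as the vector in
`ℂ^m ⊗ ℂ^n ≅ ℂ^(m×n)` whose `(i,j)` coordinate is `a i * b j`. -/
def tensor {m n : ℕ} (a : EuclideanSpace ℂ (Fin m)) (b : EuclideanSpace ℂ (Fin n)) :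
    EuclideanSpace ℂ (Fin m × Fin n) :=
  WithLp.toLp 2 (fun p : Fin m × Fin n => a p.1 * b p.2)

section InnerProductSpace

variable {𝕜 E : Type*} [RCLike 𝕜] [NormedAddCommGroup E] [InnerProductSpace 𝕜 E]

theorem eq_zero_of_forall_inner_eq_zero_of_span_eq_top {s : Set E}
    (hs : Submodule.span 𝕜 s = ⊤) {f : E} (h : ∀ u ∈ s, ⟪u, f⟫_𝕜 = 0) : f = 0 := by
  have hle : Submodule.span 𝕜 s ≤ (𝕜 ∙ f)ᗮ := by
    rw [Submodule.span_le]
    intro u hu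
    rw [SetLike.mem_coe, Submodule.mem_orthogonal_singleton_iff_inner_right,
      ← inner_conj_symm, h u hu, map_zero]
  rw [hs, top_le_iff] at hle
  have hf : f ∈ (𝕜 ∙ f)ᗮ := hle ▸ Submodule.mem_top
  exact inner_self_eq_zero.mp (Submodule.mem_orthogonal_singleton_iff_inner_right.mp hf)

theorem Finset.card_lt_of_forall_inner_eq_zero {X : Type*} {m : ℕ} {φ : X → E}
    (hφ : ∀ T : Finset X, T.card = m → Submodule.span 𝕜 (φ '' ↑T) = ⊤) {f : E} (hf : f ≠ 0)
    {S : Finset X} (hS : ∀ x ∈ S, ⟪φ x, f⟫_𝕜 = 0) : S.card < m := by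
  by_contra! hm
  obtain ⟨T, hTS, hT⟩ := S.exists_subset_card_eq hm
  refine hf (eq_zero_of_forall_inner_eq_zero_of_span_eq_top (hφ T hT) ?_)
  rintro _ ⟨x, hx, rfl⟩
  exact hS x (hTS hx)

end InnerProductSpace

section Tensor

variable {m n : ℕ}

theorem inner_tensor_tensor (a c : EuclideanSpace ℂ (Fin m)) (b d : EuclideanSpace ℂ (Fin n)) :
    ⟪tensor a b, tensor c d⟫_ℂ = ⟪a, c⟫_ℂ * ⟪b, d⟫_ℂ := by
  simp only [tensor, PiLp.inner_apply, RCLike.inner_apply, Fintype.sum_prod_type,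
    Finset.sum_mul_sum, map_mul]
  exact Finset.sum_congr rfl fun _ _ => Finset.sum_congr rfl fun _ _ => mul_mul_mul_comm _ _ _ _

@[simp]
theorem tensor_zero_left (b : EuclideanSpace ℂ (Fin n)) :
    tensor (0 : EuclideanSpace ℂ (Fin m)) b = 0 := by
  ext; simp [tensor]

@[simp]
theorem tensor_zero_right (a : EuclideanSpace ℂ (Fin m)) :
    tensor a (0 : EuclideanSpace ℂ (Fin n)) = 0 := by
  ext; simp [tensor]

end Tensor

theorem stmt0 (m n : ℕ) (X : Type) [Fintype X]
    (φ : X → EuclideanSpace ℂ (Fin m)) (χ : X → EuclideanSpace ℂ (Fin n))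
    (hcard : m + n - 1 ≤ Fintype.card X)
    (hφ : ∀ T : Finset X, T.card = m → Submodule.span ℂ (φ '' ↑T) = ⊤)
    (hχ : ∀ T : Finset X, T.card = n → Submodule.span ℂ (χ '' ↑T) = ⊤)
    (f : EuclideanSpace ℂ (Fin m)) (g : EuclideanSpace ℂ (Fin n))
    (horth : ∀ x : X, ⟪tensor (φ x) (χ x), tensor f g⟫_ℂ = 0) :
    tensor f g = 0 := by
  obtain rfl | hf := eq_or_ne f 0
  · exact tensor_zero_left g
  obtain rfl | hg := eq_or_ne g 0
  · exact tensor_zero_right f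
  classical
  let S := Finset.univ.filter fun x => ⟪φ x, f⟫_ℂ = 0
  let T := Finset.univ.filter fun x => ⟪χ x, g⟫_ℂ = 0
  have hST : Finset.univ ⊆ S ∪ T := fun x _ => by
    simpa [S, T, inner_tensor_tensor] using horth x
  have hS : S.card < m := Finset.card_lt_of_forall_inner_eq_zero hφ hf fun _ hx =>
    (Finset.mem_filter.mp hx).2
  have hT : T.card < n := Finset.card_lt_of_forall_inner_eq_zero hχ hg fun _ hx =>
    (Finset.mem_filter.mp hx).2
  have := (Finset.card_le_card hST).trans (Finset.card_union_le S T)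
  rw [Finset.card_univ] at this
  omega
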